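/- arXiv:2108.09250 — 3 statements merged into one kernel-verified Lean document; each statement's English description precedes it below -/
import Mathlib

section
/- Any strategy transforming a horizontal line of n nodes into the 'T-shape' nice shape (a horizontal line of ⌈n/2⌉ nodes together with a vertical line of ⌊n/2⌋ nodes above its central node) requires Ω(n²) rotation moves, since each of the ⌊n/2⌋ nodes placed on the vertical line must each traverse Manhattan distance at least ⌊n/4⌋, and each rotation move changes a node's position by Manhattan distance at most 2. -/
abbrev Cell : Type := ℤ × ℤ

def edgeAdj (a b : Cell) : Prop := |a.1 - b.1| + |a.2 - b.2| = 1

def diagAdj (a b : Cell) : Prop := |a.1 - b.1| = 1 ∧ |a.2 - b.2| = 1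

/-- `u` rotates around its edge-adjacent neighbour `v` to the cell `w`,
which is diagonally adjacent to `u` and edge-adjacent to `v`; both `w` and
the intermediate cell `u + w - v` must be empty. -/
def RotMove (A B : Finset Cell) (u v w : Cell) : Prop :=
  u ∈ A ∧ v ∈ A ∧ edgeAdj u v ∧ edgeAdj v w ∧ diagAdj u w ∧
  w ∉ A ∧ u + w - v ∉ A ∧ B = insert w (A.erase u)

def Rot (A B : Finset Cell) : Prop := ∃ u v w, RotMove A B u v w

def Reaches : Finset Cell → Finset Cell → Prop := Relation.ReflTransGen Rot

def ShapeConnected (S : Finset Cell) : Prop :=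
  ∀ a ∈ S, ∀ b ∈ S,
    Relation.ReflTransGen (fun p q => p ∈ S ∧ q ∈ S ∧ edgeAdj p q) a b

def ConnReaches : Finset Cell → Finset Cell → Prop :=
  Relation.ReflTransGen (fun A B => Rot A B ∧ ShapeConnected A ∧ ShapeConnected B)

def manh (a b : Cell) : ℤ := |a.1 - b.1| + |a.2 - b.2|

def bcount (S : Finset Cell) : ℕ := (S.filter (fun c => (c.1 + c.2) % 2 = 0)).card

def rcount (S : Finset Cell) : ℕ := (S.filter (fun c => (c.1 + c.2) % 2 ≠ 0)).card

def lineShape (n : ℕ) : Finset Cell :=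
  (Finset.range n).image (fun k : ℕ => ((k : ℤ), (0 : ℤ)))

/-- The T-shaped nice shape: a horizontal line of `⌈n/2⌉` nodes together with
a vertical line of `⌊n/2⌋` nodes above its central node. -/
def tShape (n : ℕ) : Finset Cell :=
  ((Finset.range ((n + 1) / 2)).image (fun i : ℕ => ((i : ℤ), (0 : ℤ)))) ∪
    ((Finset.Icc 1 (n / 2)).image
      (fun j : ℕ => (((((n + 1) / 2 - 1) / 2 : ℕ) : ℤ), (j : ℤ))))

/-- Transforming a line of `n` labeled nodes into the T-shape requires
`Ω(n²)` rotation moves: since each of the `⌊n/2⌋` vertical nodes must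
traverse Manhattan distance at least `⌊n/4⌋` and each move changes a node's
position by Manhattan distance at most 2, the number `T` of moves satisfies
`⌊n/2⌋·⌊n/4⌋ ≤ 2T`. -/
theorem line_to_tshape_lower_bound (n T : ℕ) (C : ℕ → Fin n → Cell)
    (h0 : ∀ i : Fin n, C 0 i = ((i : ℤ), (0 : ℤ)))
    (hstep : ∀ k < T, ∃ i : Fin n,
      (∀ j : Fin n, j ≠ i → C (k + 1) j = C k j) ∧ manh (C (k + 1) i) (C k i) ≤ 2)
    (hfinal : Finset.image (C T) Finset.univ = tShape n) :
    n / 2 * (n / 4) ≤ 2 * T := by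
  classical
  set m := n / 2 with hm
  set Φ : ℕ → ℕ := fun k => ∑ i : Fin n, ((C k i).2).natAbs with hΦ
  -- the potential increases by at most 2 each step
  have hstepΦ : ∀ k < T, Φ (k + 1) ≤ Φ k + 2 := by
    intro k hk
    obtain ⟨i, hfix, hmove⟩ := hstep k hk
    have hy : ((C (k + 1) i).2).natAbs ≤ ((C k i).2).natAbs + 2 := by
      simp only [manh, Int.abs_eq_natAbs] at hmove
      omega
    have e1 : Φ (k + 1) =
        (∑ j ∈ Finset.univ.erase i, ((C (k + 1) j).2).natAbs) + ((C (k + 1) i).2).natAbs :=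
      (Finset.sum_erase_add _ _ (Finset.mem_univ i)).symm
    have e2 : Φ k =
        (∑ j ∈ Finset.univ.erase i, ((C k j).2).natAbs) + ((C k i).2).natAbs :=
      (Finset.sum_erase_add _ _ (Finset.mem_univ i)).symm
    have e3 : (∑ j ∈ Finset.univ.erase i, ((C (k + 1) j).2).natAbs) =
        ∑ j ∈ Finset.univ.erase i, ((C k j).2).natAbs := by
      refine Finset.sum_congr rfl fun j hj => ?_
      rw [hfix j (Finset.ne_of_mem_erase hj)]
    omega
  -- hence Φ T ≤ 2 T
  have hΦ0 : Φ 0 = 0 := by simp [hΦ, h0]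
  have hΦT : ∀ k ≤ T, Φ k ≤ 2 * k := by
    intro k
    induction k with
    | zero => intro _; simp [hΦ0]
    | succ k ih =>
      intro hk
      have := hstepΦ k (by omega)
      have := ih (by omega)
      omega
  -- the sum over the image is at most Φ T
  have himg : ∀ (s : Finset (Fin n)) (f : Cell → ℕ),
      ∑ b ∈ s.image (C T), f b ≤ ∑ a ∈ s, f (C T a) := by
    intro s f
    induction s using Finset.induction_on with
    | empty => simp
    | @insert a s h ih =>
      rw [Finset.image_insert, Finset.sum_insert h]
      by_cases hg : C T a ∈ s.image (C T)
      · rw [Finset.insert_eq_self.2 hg]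
        exact le_trans ih (Nat.le_add_left _ _)
      · rw [Finset.sum_insert hg]
        exact Nat.add_le_add_left ih _
  have hsum : ∑ c ∈ tShape n, (c.2).natAbs ≤ Φ T := by
    have := himg Finset.univ (fun c => (c.2).natAbs)
    rwa [hfinal] at this
  -- the vertical part of the T-shape contributes at least ∑_{j=1}^m j
  have hsub : (Finset.Icc 1 m).image
      (fun j : ℕ => (((((n + 1) / 2 - 1) / 2 : ℕ) : ℤ), (j : ℤ))) ⊆ tShape n :=
    Finset.subset_union_right
  have hvert : ∑ j ∈ Finset.Icc 1 m, j ≤ ∑ c ∈ tShape n, (c.2).natAbs := by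
    have hinj : Set.InjOn (fun j : ℕ => (((((n + 1) / 2 - 1) / 2 : ℕ) : ℤ), (j : ℤ)))
        (Finset.Icc 1 m) := by
      intro a _ b _ hab
      simpa using congrArg Prod.snd hab
    calc ∑ j ∈ Finset.Icc 1 m, j
        = ∑ c ∈ (Finset.Icc 1 m).image
            (fun j : ℕ => (((((n + 1) / 2 - 1) / 2 : ℕ) : ℤ), (j : ℤ))), (c.2).natAbs := by
          rw [Finset.sum_image hinj]; simp
      _ ≤ ∑ c ∈ tShape n, (c.2).natAbs :=
          Finset.sum_le_sum_of_subset hsub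
  -- Gauss sum bound
  have hgauss : m * (m + 1) = (∑ j ∈ Finset.Icc 1 m, j) * 2 := by
    have h1 : ∑ j ∈ Finset.Icc 1 m, j = ∑ j ∈ Finset.range (m + 1), j := by
      rw [Finset.range_eq_Ico, ← Finset.Ico_add_one_right_eq_Icc]
      rw [Finset.sum_eq_sum_Ico_succ_bot (by omega : 0 < m + 1)]
      simp
    rw [h1, Finset.sum_range_id_mul_two, Nat.add_sub_cancel, Nat.mul_comm]
  have h4 : n / 4 = m / 2 := by omega
  have hfin : m * (m / 2) ≤ ∑ j ∈ Finset.Icc 1 m, j := by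
    have h2 : 2 * (m / 2) ≤ m := Nat.mul_div_le m 2 |>.trans_eq rfl |>.trans (le_refl m)
    nlinarith [Nat.mul_div_le m 2]
  rw [h4]
  calc m * (m / 2) ≤ ∑ j ∈ Finset.Icc 1 m, j := hfin
    _ ≤ ∑ c ∈ tShape n, (c.2).natAbs := hvert
    _ ≤ Φ T := hsum
    _ ≤ 2 * T := hΦT T le_rfl
end

section
/- For a horizontal line of n ≥ 6 nodes with no seed, under connectivity-preserving rotation moves, only the two end nodes can ever move: any rotation move of a non-end node disconnects the shape. -/
lemma mem_lineShape {n : ℕ} {c : Cell} :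
    c ∈ lineShape n ↔ ∃ k : ℕ, k < n ∧ c = ((k : ℤ), (0:ℤ)) := by
  simp [lineShape, Finset.mem_image, eq_comm]

/-- For a horizontal line of `n ≥ 6` nodes, any rotation move of a non-end
node produces a disconnected shape: only the two end nodes can move while
preserving connectivity. -/
theorem line_only_ends_move (n : ℕ) (hn : 6 ≤ n) (B : Finset Cell)
    (u v w : Cell) (h : RotMove (lineShape n) B u v w)
    (hu : u ≠ ((0:ℤ), (0:ℤ)) ∧ u ≠ (((n:ℤ) - 1), (0:ℤ))) :
    ¬ ShapeConnected B := by
  obtain ⟨huA, hvA, huv, hvw, hdiag, hwA, hmid, hB⟩ := h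
  obtain ⟨k, hk, rfl⟩ := mem_lineShape.mp huA
  -- bounds on k
  have hk1 : 1 ≤ (k : ℤ) := by
    rcases Nat.eq_zero_or_pos k with h0 | h0
    · exact absurd (by simp [h0]) hu.1
    · exact_mod_cast h0
  have hk2 : (k : ℤ) < (n : ℤ) - 1 := by
    have : (k : ℤ) ≠ (n : ℤ) - 1 := fun he => hu.2 (by simp [he])
    omega
  -- every element of B has first coordinate ≠ k
  have hBfst : ∀ b ∈ B, b.1 ≠ (k : ℤ) := by
    intro b hb
    rw [hB, Finset.mem_insert] at hb
    rcases hb with rfl | hb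
    · intro he
      have := hdiag.1
      simp [he] at this
    · obtain ⟨hne, hbl⟩ := Finset.mem_erase.mp hb
      obtain ⟨j, hj, rfl⟩ := mem_lineShape.mp hbl
      intro he
      exact hne (by simp_all)
  -- endpoints in B
  have h0B : ((0:ℤ), (0:ℤ)) ∈ B := by
    rw [hB, Finset.mem_insert]
    right
    refine Finset.mem_erase.mpr ⟨Ne.symm hu.1, mem_lineShape.mpr ⟨0, by omega, by simp⟩⟩
  have hnB : (((n:ℤ) - 1), (0:ℤ)) ∈ B := by
    rw [hB, Finset.mem_insert]
    right
    have he : ((n:ℤ) - 1) = ((n - 1 : ℕ) : ℤ) := by omega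
    exact Finset.mem_erase.mpr ⟨Ne.symm hu.2, mem_lineShape.mpr ⟨n - 1, by omega, by rw [he]⟩⟩
  intro hconn
  have path := hconn _ h0B _ hnB
  have key : ∀ c : Cell,
      Relation.ReflTransGen (fun p q => p ∈ B ∧ q ∈ B ∧ edgeAdj p q) ((0:ℤ),(0:ℤ)) c →
      c.1 < (k : ℤ) := by
    intro c hc
    induction hc with
    | refl => exact hk1
    | @tail b c _ step ih =>
      obtain ⟨_, hcB, hadj⟩ := step
      have h1 : |b.1 - c.1| + |b.2 - c.2| = 1 := hadj
      have h2 : (0:ℤ) ≤ |b.1 - c.1| := abs_nonneg _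
      have h3 : (0:ℤ) ≤ |b.2 - c.2| := abs_nonneg _
      have h4 : |b.1 - c.1| ≤ 1 := by linarith
      have h5 := abs_le.mp h4
      have h6 := hBfst _ hcB
      omega
  have := key _ path
  simp at this
  omega
end

section
/- A horizontal line of n nodes is colour-balanced: it contains ⌈n/2⌉ nodes of one colour and ⌊n/2⌋ of the other. Consequently, any nice shape reachable from a line of n nodes by rotation moves has ⌈n/2⌉ cells of one checkerboard colour and ⌊n/2⌋ of the other. -/
lemma filter_count_rot {A B : Finset Cell} (h : Rot A B)
    (p : Cell → Prop) [DecidablePred p]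
    (hp : ∀ u w : Cell, diagAdj u w → (p u ↔ p w)) :
    (B.filter p).card = (A.filter p).card := by
  obtain ⟨u, v, w, hu, hv, _, _, hdiag, hwA, _, hB⟩ := h
  subst hB
  have hpw := hp u w hdiag
  have hwu : w ≠ u := fun h => by
    subst h; exact hwA hu
  by_cases hpu : p u
  · have hpw' : p w := hpw.mp hpu
    rw [Finset.filter_insert, if_pos hpw', Finset.filter_erase,
      Finset.card_insert_of_notMem (fun hmem => hwA (Finset.mem_filter.mp (Finset.mem_erase.mp hmem).2).1),
      Finset.card_erase_of_mem (Finset.mem_filter.mpr ⟨hu, hpu⟩)]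
    have : 0 < (A.filter p).card := Finset.card_pos.mpr ⟨u, Finset.mem_filter.mpr ⟨hu, hpu⟩⟩
    omega
  · have hpw' : ¬ p w := fun h => hpu (hpw.mpr h)
    rw [Finset.filter_insert, if_neg hpw', Finset.filter_erase,
      Finset.erase_eq_of_notMem (fun hmem => hpu (Finset.mem_filter.mp hmem).2)]

lemma diag_parity (u w : Cell) (h : diagAdj u w) :
    ((u.1 + u.2) % 2 = 0 ↔ (w.1 + w.2) % 2 = 0) := by
  obtain ⟨h1, h2⟩ := h
  have a1 : u.1 - w.1 = 1 ∨ u.1 - w.1 = -1 := abs_eq (by norm_num) |>.mp h1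
  have a2 : u.2 - w.2 = 1 ∨ u.2 - w.2 = -1 := abs_eq (by norm_num) |>.mp h2
  omega

lemma rot_counts {A B : Finset Cell} (h : Rot A B) :
    bcount B = bcount A ∧ rcount B = rcount A := by
  constructor
  · exact filter_count_rot h _ diag_parity
  · exact filter_count_rot h _ (fun u w hd => not_iff_not.mpr (diag_parity u w hd))

lemma line_counts (n : ℕ) :
    bcount (lineShape n) = (n + 1) / 2 ∧ rcount (lineShape n) = n / 2 := by
  induction n with
  | zero => simp [bcount, rcount, lineShape]
  | succ m ih =>
    have hline : lineShape (m + 1) = insert ((m : ℤ), (0 : ℤ)) (lineShape m) := by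
      simp [lineShape, Finset.range_add_one, Finset.image_insert]
    have hnot : ((m : ℤ), (0 : ℤ)) ∉ lineShape m := by
      simp only [lineShape, Finset.mem_image, Finset.mem_range]
      rintro ⟨k, hk, hkeq⟩
      have : (k : ℤ) = m := (Prod.mk.injEq _ _ _ _).mp hkeq |>.1
      omega
    by_cases hm : (m : ℤ) % 2 = 0
    · have hb : bcount (lineShape (m+1)) = bcount (lineShape m) + 1 := by
        rw [hline, bcount, Finset.filter_insert, if_pos (by simpa using hm),
          Finset.card_insert_of_notMem (fun hmem => hnot (Finset.mem_filter.mp hmem).1)]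
        rfl
      have hr : rcount (lineShape (m+1)) = rcount (lineShape m) := by
        rw [hline, rcount, Finset.filter_insert, if_neg (by simpa using hm)]
        rfl
      have : m % 2 = 0 := by omega
      refine ⟨?_, ?_⟩
      · rw [hb, ih.1]; omega
      · rw [hr, ih.2]; omega
    · have hb : bcount (lineShape (m+1)) = bcount (lineShape m) := by
        rw [hline, bcount, Finset.filter_insert, if_neg (by simpa using hm)]
        rfl
      have hr : rcount (lineShape (m+1)) = rcount (lineShape m) + 1 := by
        rw [hline, rcount, Finset.filter_insert, if_pos (by simpa using hm),
          Finset.card_insert_of_notMem (fun hmem => hnot (Finset.mem_filter.mp hmem).1)]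
        rfl
      have : m % 2 = 1 := by omega
      refine ⟨?_, ?_⟩
      · rw [hb, ih.1]; omega
      · rw [hr, ih.2]; omega

/-- A horizontal line of `n` nodes has `⌈n/2⌉` black and `⌊n/2⌋` red cells,
and consequently every shape reachable from it by rotation moves has the same
colour counts. -/
theorem line_colour_balanced (n : ℕ) :
    bcount (lineShape n) = (n + 1) / 2 ∧ rcount (lineShape n) = n / 2 ∧
    ∀ S : Finset Cell, Reaches (lineShape n) S →
      bcount S = (n + 1) / 2 ∧ rcount S = n / 2 := by
  refine ⟨(line_counts n).1, (line_counts n).2, ?_⟩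
  intro S hS
  induction hS with
  | refl => exact line_counts n
  | tail _ hrot ih =>
    obtain ⟨hb, hr⟩ := rot_counts hrot
    exact ⟨hb.trans ih.1, hr.trans ih.2⟩
end
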